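/- arXiv:1806.05206 — 5 statements merged into one kernel-verified Lean document; each statement's English description precedes it below -/
import Mathlib

section
/- For every E > λ₀ and every x ∈ F₊, the supremum Q(E,x) = sup_{y∈F₋} φ_{E,x}(y) is finite and satisfies the two-sided bound ⟨x, Ax⟩ − E‖x‖² ≤ Q(E,x) ≤ ⟨x, Ax⟩ − E‖x‖² + ‖Λ₋(Ax)‖²/(E−λ₀); in particular, φ_{E,x}(y) ≤ ⟨x, Ax⟩ − E‖x‖² + ‖Λ₋(Ax)‖²/(E−λ₀) for every y ∈ F₋. -/
/-!
Write `w := Λ₋(Ax)`. For `y ∈ F₋` we have `⟨x, y⟩ = 0` and `⟨y, Ax⟩ = ⟨y, w⟩`, so expanding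
`φ_{E,x}(y)` and using `⟨y, Ay⟩ ≤ λ₀‖y‖²` gives
`φ_{E,x}(y) ≤ φ_{E,x}(0) + 2‖y‖‖w‖ − (E − λ₀)‖y‖²`, and completing the square in `‖y‖`
bounds the last two terms by `‖w‖²/(E − λ₀)`. Taking `y = 0` gives the lower bound on the supremum.
-/

local notation "⟪" x ", " y "⟫" => @inner ℂ _ _ x y

open RCLike
open scoped InnerProductSpace

section

variable {𝕜 H : Type*} [RCLike 𝕜] [NormedAddCommGroup H] [InnerProductSpace 𝕜 H]

def LinearPMap.shiftedQuadForm (A : H →ₗ.[𝕜] H) (E : ℝ) (z : A.domain) : ℝ :=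
  re ⟪(z : H), A z⟫_𝕜 - E * ‖(z : H)‖ ^ 2

theorem LinearPMap.IsFormalAdjoint.re_inner_add_apply_add {A : H →ₗ.[𝕜] H}
    (hA : A.IsFormalAdjoint A) (x y : A.domain) :
    re ⟪(x : H) + y, A (x + y)⟫_𝕜 =
      re ⟪(x : H), A x⟫_𝕜 + 2 * re ⟪(y : H), A x⟫_𝕜 + re ⟪(y : H), A y⟫_𝕜 := by
  have hcross : re ⟪(x : H), A y⟫_𝕜 = re ⟪(y : H), A x⟫_𝕜 := by
    rw [← hA x y, inner_re_symm]
  rw [A.map_add, inner_add_left, inner_add_right, inner_add_right, _root_.map_add,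
    _root_.map_add, _root_.map_add, hcross]
  ring

theorem LinearPMap.IsFormalAdjoint.shiftedQuadForm_add_le {A : H →ₗ.[𝕜] H}
    (hA : A.IsFormalAdjoint A) {lam0 E : ℝ} (hE : lam0 < E) {x y : A.domain} {w : H}
    (hxy : ⟪(x : H), y⟫_𝕜 = 0) (hyw : ⟪(y : H), A x⟫_𝕜 = ⟪(y : H), w⟫_𝕜)
    (hy : re ⟪(y : H), A y⟫_𝕜 ≤ lam0 * ‖(y : H)‖ ^ 2) :
    A.shiftedQuadForm E (x + y) ≤ A.shiftedQuadForm E x + ‖w‖ ^ 2 / (E - lam0) := by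
  have hδ : 0 < E - lam0 := sub_pos.mpr hE
  have hnorm : ‖(x : H) + y‖ ^ 2 = ‖(x : H)‖ ^ 2 + ‖(y : H)‖ ^ 2 := by
    simpa only [sq] using norm_add_sq_eq_norm_sq_add_norm_sq_of_inner_eq_zero _ _ hxy
  have hyw_le : re ⟪(y : H), A x⟫_𝕜 ≤ ‖(y : H)‖ * ‖w‖ :=
    hyw ▸ (re_le_norm _).trans (norm_inner_le_norm _ _)
  have hsquare : 2 * ‖(y : H)‖ * ‖w‖ ≤ (E - lam0) * ‖(y : H)‖ ^ 2 + (E - lam0)⁻¹ * ‖w‖ ^ 2 :=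
    two_mul_le_add_mul_sq hδ
  simp only [LinearPMap.shiftedQuadForm, Submodule.coe_add, hA.re_inner_add_apply_add, hnorm,
    div_eq_inv_mul]
  nlinarith

variable {T : H →ₗ[𝕜] H}

theorem LinearMap.IsSymmetric.inner_eq_zero_of_apply_eq_self_of_apply_eq_zero
    (hT : T.IsSymmetric) {x y : H} (hx : T x = x) (hy : T y = 0) : ⟪x, y⟫_𝕜 = 0 := by
  rw [← hx, hT, hy, inner_zero_right]

theorem LinearMap.IsSymmetric.inner_sub_apply_of_apply_eq_zero
    (hT : T.IsSymmetric) {y : H} (hy : T y = 0) (v : H) : ⟪y, v - T v⟫_𝕜 = ⟪y, v⟫_𝕜 := by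
  rw [inner_sub_right, ← hT, hy, inner_zero_left, sub_zero]

end

theorem schur_complement_sup_bounds_general
    {H : Type*} [NormedAddCommGroup H] [InnerProductSpace ℂ H]
    (A : H →ₗ.[ℂ] H)
    (hsymm : ∀ x y : A.domain, ⟪A x, (y : H)⟫ = ⟪(x : H), A y⟫)
    (P : H →L[ℂ] H)
    (hPsa : ∀ u v : H, ⟪P u, v⟫ = ⟪u, P v⟫)
    (lam0 : ℝ)
    (hlam0 : ∀ y : A.domain, P (y : H) = 0 →
      (⟪(y : H), A y⟫).re ≤ lam0 * ‖(y : H)‖ ^ 2)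
    (E : ℝ) (hE : lam0 < E)
    (x : A.domain) (hx : P (x : H) = (x : H))
    (S : Set ℝ)
    (hS : S = {r : ℝ | ∃ y : A.domain, P (y : H) = 0 ∧
      r = (⟪(x : H) + (y : H), A (x + y)⟫).re - E * ‖(x : H) + (y : H)‖ ^ 2}) :
    BddAbove S ∧
    (⟪(x : H), A x⟫).re - E * ‖(x : H)‖ ^ 2 ≤ sSup S ∧
    sSup S ≤ (⟪(x : H), A x⟫).re - E * ‖(x : H)‖ ^ 2 +
      ‖A x - P (A x)‖ ^ 2 / (E - lam0) ∧
    ∀ y : A.domain, P (y : H) = 0 →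
      (⟪(x : H) + (y : H), A (x + y)⟫).re - E * ‖(x : H) + (y : H)‖ ^ 2 ≤
        (⟪(x : H), A x⟫).re - E * ‖(x : H)‖ ^ 2 + ‖A x - P (A x)‖ ^ 2 / (E - lam0) := by
  have hP : (P : H →ₗ[ℂ] H).IsSymmetric := hPsa
  have bound : ∀ y : A.domain, P (y : H) = 0 →
      A.shiftedQuadForm E (x + y) ≤
        A.shiftedQuadForm E x + ‖A x - P (A x)‖ ^ 2 / (E - lam0) := fun y hy =>
    LinearPMap.IsFormalAdjoint.shiftedQuadForm_add_le hsymm hE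
      (hP.inner_eq_zero_of_apply_eq_self_of_apply_eq_zero hx hy)
      (hP.inner_sub_apply_of_apply_eq_zero hy _).symm (hlam0 y hy)
  have hupper : ∀ r ∈ S, r ≤ A.shiftedQuadForm E x + ‖A x - P (A x)‖ ^ 2 / (E - lam0) := by
    rw [hS]
    rintro r ⟨y, hy, rfl⟩
    exact bound y hy
  have hmem : A.shiftedQuadForm E x ∈ S := by
    refine hS ▸ ⟨0, map_zero P, ?_⟩
    simp [LinearPMap.shiftedQuadForm]
  exact ⟨⟨_, hupper⟩, le_csSup ⟨_, hupper⟩ hmem, csSup_le ⟨_, hmem⟩ hupper, bound⟩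

/-- For `E > λ₀` and `x ∈ F₊`, the Schur complement value
`Q(E,x) = sup_{y ∈ F₋} φ_{E,x}(y)` (with `φ_{E,x}(y) = ⟨x+y, A(x+y)⟩ − E‖x+y‖²`) is finite
and satisfies `⟨x,Ax⟩ − E‖x‖² ≤ Q(E,x) ≤ ⟨x,Ax⟩ − E‖x‖² + ‖Λ₋(Ax)‖²/(E−λ₀)`; in
particular every `φ_{E,x}(y)`, `y ∈ F₋`, is bounded by the right-hand side. -/
theorem schur_complement_sup_bounds
    {H : Type*} [NormedAddCommGroup H] [InnerProductSpace ℂ H] [CompleteSpace H]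
    (A : H →ₗ.[ℂ] H)
    (hdense : Dense (A.domain : Set H))
    (hsymm : ∀ x y : A.domain, ⟪A x, (y : H)⟫ = ⟪(x : H), A y⟫)
    (P : H →L[ℂ] H)
    (hPsa : ∀ u v : H, ⟪P u, v⟫ = ⟪u, P v⟫)
    (hPidem : ∀ u : H, P (P u) = P u)
    (hPinv : ∀ x ∈ A.domain, P x ∈ A.domain)
    (lam0 : ℝ)
    (hlam0 : ∀ y : A.domain, P (y : H) = 0 →
      (⟪(y : H), A y⟫).re ≤ lam0 * ‖(y : H)‖ ^ 2)
    (E : ℝ) (hE : lam0 < E)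
    (x : A.domain) (hx : P (x : H) = (x : H))
    (S : Set ℝ)
    (hS : S = {r : ℝ | ∃ y : A.domain, P (y : H) = 0 ∧
      r = (⟪(x : H) + (y : H), A (x + y)⟫).re - E * ‖(x : H) + (y : H)‖ ^ 2}) :
    BddAbove S ∧
    (⟪(x : H), A x⟫).re - E * ‖(x : H)‖ ^ 2 ≤ sSup S ∧
    sSup S ≤ (⟪(x : H), A x⟫).re - E * ‖(x : H)‖ ^ 2 +
      ‖A x - P (A x)‖ ^ 2 / (E - lam0) ∧
    ∀ y : A.domain, P (y : H) = 0 →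
      (⟪(x : H) + (y : H), A (x + y)⟫).re - E * ‖(x : H) + (y : H)‖ ^ 2 ≤
        (⟪(x : H), A x⟫).re - E * ‖(x : H)‖ ^ 2 + ‖A x - P (A x)‖ ^ 2 / (E - lam0) :=
  schur_complement_sup_bounds_general A hsymm P hPsa lam0 hlam0 E hE x hx S hS
end

section
/- For λ₀ < E < E′ and every x ∈ F₊ one has Q(E,x) ≥ Q(E′,x) + (E′−E)·‖x‖²; in particular, for fixed x ∈ F₊ \ {0} the function E ↦ Q(E,x) is strictly decreasing on (λ₀, ∞). -/
/-!
For `x ∈ F₊` and `y ∈ F₋` the vectors are orthogonal, so `‖x + y‖² = ‖x‖² + ‖y‖² ≥ ‖x‖²` and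
therefore `φ_{E',x}(y) + (E' - E)‖x‖² ≤ φ_{E,x}(y)` pointwise in `y`; taking suprema gives the
inequality. The supremum defining `Q(E,x)` is finite because, for `E > λ₀`, the part of
`φ_{E,x}(y)` quadratic in `y` is at most `-(E - λ₀)‖y‖²`, which dominates the linear part
`2 Re⟨Ax, y⟩`.
-/

local notation "⟪" x ", " y "⟫" => @inner ℂ _ _ x y

open RCLike

section

variable {𝕜 H : Type*} [RCLike 𝕜] [SeminormedAddCommGroup H] [InnerProductSpace 𝕜 H]

theorem LinearMap.IsSymmetric.inner_eq_zero_of_apply_eq_self_of_apply_eq_zero_s5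
    {P : H →ₗ[𝕜] H} (hP : P.IsSymmetric) {x y : H} (hx : P x = x) (hy : P y = 0) :
    inner 𝕜 x y = 0 := by
  rw [← hx, hP, hy, inner_zero_right]

theorem norm_sq_le_norm_add_sq_of_inner_eq_zero {x y : H} (h : inner 𝕜 x y = 0) :
    ‖x‖ ^ 2 ≤ ‖x + y‖ ^ 2 := by
  rw [@norm_add_sq 𝕜, h, map_zero]
  nlinarith [sq_nonneg ‖y‖]

end

namespace LinearPMap

variable {𝕜 H : Type*} [RCLike 𝕜] [SeminormedAddCommGroup H] [InnerProductSpace 𝕜 H]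

/-- `φ_{E,x}(y)`, for every `y` in the domain of `A`; `Q(E,x)` is its supremum over
`F₋ = {y | P y = 0}`. -/
noncomputable def schurEnergy (A : H →ₗ.[𝕜] H) (E : ℝ) (x y : A.domain) : ℝ :=
  re (inner 𝕜 ((x : H) + y) (A (x + y))) - E * ‖(x : H) + y‖ ^ 2

variable {A : H →ₗ.[𝕜] H}

theorem re_inner_apply_add (hA : ∀ x y : A.domain, inner 𝕜 (A x) (y : H) = inner 𝕜 (x : H) (A y))
    (x y : A.domain) :
    re (inner 𝕜 ((x : H) + y) (A (x + y))) =
      re (inner 𝕜 (x : H) (A x)) + 2 * re (inner 𝕜 (A x) (y : H)) + re (inner 𝕜 (y : H) (A y)) := by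
  rw [A.map_add, inner_add_left, inner_add_right, inner_add_right, ← hA x y]
  simp only [AddMonoidHom.map_add]
  rw [inner_re_symm (𝕜 := 𝕜) (y : H) (A x)]
  ring

theorem schurEnergy_le (hA : ∀ x y : A.domain, inner 𝕜 (A x) (y : H) = inner 𝕜 (x : H) (A y))
    {lam0 E : ℝ} (hE : lam0 < E) {x y : A.domain} (hxy : inner 𝕜 (x : H) y = 0)
    (hy : re (inner 𝕜 (y : H) (A y)) ≤ lam0 * ‖(y : H)‖ ^ 2) :
    A.schurEnergy E x y ≤
      re (inner 𝕜 (x : H) (A x)) - E * ‖(x : H)‖ ^ 2 + ‖A x‖ ^ 2 / (E - lam0) := by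
  have hc : 0 < E - lam0 := sub_pos.mpr hE
  have hcross : re (inner 𝕜 (A x) (y : H)) ≤ ‖A x‖ * ‖(y : H)‖ :=
    (re_le_norm _).trans (norm_inner_le_norm _ _)
  -- completing the square: `2 a t - c t² ≤ a² / c`
  have hsq : 2 * (‖A x‖ * ‖(y : H)‖) - (E - lam0) * ‖(y : H)‖ ^ 2 ≤ ‖A x‖ ^ 2 / (E - lam0) := by
    rw [le_div_iff₀ hc]
    nlinarith [sq_nonneg (‖A x‖ - (E - lam0) * ‖(y : H)‖)]
  have hpyth : ‖(x : H) + y‖ ^ 2 = ‖(x : H)‖ ^ 2 + ‖(y : H)‖ ^ 2 := by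
    simp only [@norm_add_sq 𝕜, hxy, zero_re, mul_zero, add_zero]
  rw [schurEnergy, re_inner_apply_add hA, hpyth]
  nlinarith

theorem schurEnergy_add_le (x y : A.domain) (hxy : inner 𝕜 (x : H) y = 0) {E E' : ℝ}
    (hE : E ≤ E') :
    A.schurEnergy E' x y + (E' - E) * ‖(x : H)‖ ^ 2 ≤ A.schurEnergy E x y := by
  have := mul_le_mul_of_nonneg_left (norm_sq_le_norm_add_sq_of_inner_eq_zero hxy) (sub_nonneg.mpr hE)
  rw [schurEnergy, schurEnergy]
  linarith

end LinearPMap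

theorem csSup_image_add_le {ι : Type*} {s : Set ι} (hs : s.Nonempty) {f g : ι → ℝ}
    (hg : BddAbove (g '' s)) {c : ℝ} (h : ∀ i ∈ s, f i + c ≤ g i) :
    sSup (f '' s) + c ≤ sSup (g '' s) := by
  rw [← le_sub_iff_add_le]
  refine csSup_le (hs.image f) ?_
  rintro _ ⟨i, hi, rfl⟩
  rw [le_sub_iff_add_le]
  exact (h i hi).trans (le_csSup hg (Set.mem_image_of_mem g hi))

open LinearPMap in
theorem schur_complement_monotone_general
    {H : Type*} [NormedAddCommGroup H] [InnerProductSpace ℂ H]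
    (A : H →ₗ.[ℂ] H)
    (hsymm : ∀ x y : A.domain, ⟪A x, (y : H)⟫ = ⟪(x : H), A y⟫)
    (P : H →L[ℂ] H)
    (hPsa : ∀ u v : H, ⟪P u, v⟫ = ⟪u, P v⟫)
    (lam0 : ℝ)
    (hlam0 : ∀ y : A.domain, P (y : H) = 0 →
      (⟪(y : H), A y⟫).re ≤ lam0 * ‖(y : H)‖ ^ 2)
    (Q : ℝ → A.domain → ℝ)
    (hQ : ∀ (E : ℝ) (x : A.domain), Q E x =
      sSup {r : ℝ | ∃ y : A.domain, P (y : H) = 0 ∧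
        r = (⟪(x : H) + (y : H), A (x + y)⟫).re - E * ‖(x : H) + (y : H)‖ ^ 2}) :
    (∀ E E' : ℝ, lam0 < E → E < E' → ∀ x : A.domain, P (x : H) = (x : H) →
      Q E' x + (E' - E) * ‖(x : H)‖ ^ 2 ≤ Q E x) ∧
    (∀ x : A.domain, P (x : H) = (x : H) → (x : H) ≠ 0 →
      StrictAntiOn (fun E => Q E x) (Set.Ioi lam0)) := by
  have horth : ∀ x y : A.domain, P (x : H) = x → P (y : H) = 0 → ⟪(x : H), y⟫ = 0 :=
    fun _ _ hx hy ↦ LinearMap.IsSymmetric.inner_eq_zero_of_apply_eq_self_of_apply_eq_zero_s5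
      (P := (P : H →ₗ[ℂ] H)) hPsa hx hy
  have hQ_image : ∀ E x, Q E x = sSup (A.schurEnergy E x '' {y | P (y : H) = 0}) := by
    intro E x
    rw [hQ]
    congr 1
    ext r
    simp only [Set.mem_ofPred_eq, Set.mem_image, schurEnergy, eq_comm (a := r)]
    rfl
  have hgap : ∀ E E' : ℝ, lam0 < E → E < E' → ∀ x : A.domain, P (x : H) = (x : H) →
      Q E' x + (E' - E) * ‖(x : H)‖ ^ 2 ≤ Q E x := by
    intro E E' hE hEE' x hx
    rw [hQ_image, hQ_image]
    refine csSup_image_add_le ?_ ?_ ?_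
    · exact ⟨0, map_zero P⟩
    · exact ⟨_, Set.forall_mem_image.2 fun y hy ↦
        A.schurEnergy_le hsymm hE (horth x y hx hy) (hlam0 y hy)⟩
    · exact fun y hy ↦ A.schurEnergy_add_le x y (horth x y hx hy) hEE'.le
  refine ⟨hgap, fun x hx hx0 E hE E' _ hEE' ↦ ?_⟩
  have hpos : 0 < (E' - E) * ‖(x : H)‖ ^ 2 := by
    have := norm_pos_iff.mpr hx0
    have := sub_pos.mpr hEE'
    positivity
  have := hgap E E' hE hEE' x hx
  dsimp only
  linarith

/-- For `λ₀ < E < E′` and every `x ∈ F₊` one has `Q(E,x) ≥ Q(E′,x) + (E′−E)·‖x‖²`; in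
particular, for fixed `x ∈ F₊ \ {0}` the function `E ↦ Q(E,x)` is strictly decreasing on
`(λ₀, ∞)`. Here `Q(E,x) = sup_{y∈F₋} (⟨x+y, A(x+y)⟩ − E‖x+y‖²)`. -/
theorem schur_complement_monotone
    {H : Type*} [NormedAddCommGroup H] [InnerProductSpace ℂ H] [CompleteSpace H]
    (A : H →ₗ.[ℂ] H)
    (hdense : Dense (A.domain : Set H))
    (hsymm : ∀ x y : A.domain, ⟪A x, (y : H)⟫ = ⟪(x : H), A y⟫)
    (P : H →L[ℂ] H)
    (hPsa : ∀ u v : H, ⟪P u, v⟫ = ⟪u, P v⟫)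
    (hPidem : ∀ u : H, P (P u) = P u)
    (hPinv : ∀ x ∈ A.domain, P x ∈ A.domain)
    (lam0 : ℝ)
    (hlam0 : ∀ y : A.domain, P (y : H) = 0 →
      (⟪(y : H), A y⟫).re ≤ lam0 * ‖(y : H)‖ ^ 2)
    (Q : ℝ → A.domain → ℝ)
    (hQ : ∀ (E : ℝ) (x : A.domain), Q E x =
      sSup {r : ℝ | ∃ y : A.domain, P (y : H) = 0 ∧
        r = (⟪(x : H) + (y : H), A (x + y)⟫).re - E * ‖(x : H) + (y : H)‖ ^ 2}) :
    (∀ E E' : ℝ, lam0 < E → E < E' → ∀ x : A.domain, P (x : H) = (x : H) →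
      Q E' x + (E' - E) * ‖(x : H)‖ ^ 2 ≤ Q E x) ∧
    (∀ x : A.domain, P (x : H) = (x : H) → (x : H) ≠ 0 →
      StrictAntiOn (fun E => Q E x) (Set.Ioi lam0)) :=
  schur_complement_monotone_general A hsymm P hPsa lam0 hlam0 Q hQ
end

section
/- For λ₀ < E ≤ E′ and every x ∈ F₊, the quadratic forms q_E and q_{E′} satisfy the two-sided comparison q_{E′}(x) + (E′−E)·‖x‖_{E′}² ≤ q_E(x) ≤ q_{E′}(x) + (E′−E)·‖x‖_E². -/
local notation "⟪" x ", " y "⟫" => @inner ℂ _ _ x y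

/-!
With `b = Λ₋(Ax)` and `c = E′ − E`, the resolvent identity gives
`q_E(x) − q_{E′}(x) = c (‖x‖² + Re⟨R_E b, R_{E′} b⟩)`. Writing `R_E b = R_{E′} b + c R_E R_{E′} b`,
respectively `R_{E′} b = R_E b − c R_{E′} R_E b`, positivity of `R_E` and `R_{E′}` squeezes
`Re⟨R_E b, R_{E′} b⟩` between `‖R_{E′} b‖²` and `‖R_E b‖²`.
-/

section ResolventPair

open RCLike

variable {𝕜 H : Type*} [RCLike 𝕜] [NormedAddCommGroup H] [InnerProductSpace 𝕜 H]
  {R R' : H →ₗ[𝕜] H} {c : ℝ}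

theorem re_inner_apply_sub_re_inner_apply (hR : R.IsSymmetric)
    (hres : ∀ u, R u - R' u = (c : 𝕜) • R (R' u)) (b : H) :
    re (inner 𝕜 b (R b)) - re (inner 𝕜 b (R' b)) = c * re (inner 𝕜 (R b) (R' b)) := by
  rw [← map_sub, ← inner_sub_right, hres, inner_smul_right, ← hR, re_ofReal_mul]

theorem norm_sq_apply_right_le_re_inner (hc : 0 ≤ c) (hRpos : ∀ u, 0 ≤ re (inner 𝕜 u (R u)))
    (hres : ∀ u, R u - R' u = (c : 𝕜) • R (R' u)) (b : H) :
    ‖R' b‖ ^ 2 ≤ re (inner 𝕜 (R b) (R' b)) := by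
  have hRb : R b = R' b + (c : 𝕜) • R (R' b) := by rw [← hres]; abel
  have hsplit :
      re (inner 𝕜 (R b) (R' b)) = ‖R' b‖ ^ 2 + c * re (inner 𝕜 (R' b) (R (R' b))) := by
    rw [hRb, inner_add_left, inner_smul_left, map_add, inner_self_eq_norm_sq, conj_ofReal,
      re_ofReal_mul, inner_re_symm (R (R' b))]
  have := mul_nonneg hc (hRpos (R' b))
  linarith

theorem re_inner_le_norm_sq_apply_left (hc : 0 ≤ c) (hR'pos : ∀ u, 0 ≤ re (inner 𝕜 u (R' u)))
    (hcomm : ∀ u, R (R' u) = R' (R u)) (hres : ∀ u, R u - R' u = (c : 𝕜) • R (R' u))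
    (b : H) :
    re (inner 𝕜 (R b) (R' b)) ≤ ‖R b‖ ^ 2 := by
  have hR'b : R' b = R b - (c : 𝕜) • R' (R b) := by rw [← hcomm, ← hres]; abel
  have hsplit :
      re (inner 𝕜 (R b) (R' b)) = ‖R b‖ ^ 2 - c * re (inner 𝕜 (R b) (R' (R b))) := by
    rw [hR'b, inner_sub_right, inner_smul_right, map_sub, inner_self_eq_norm_sq, re_ofReal_mul]
  have := mul_nonneg hc (hR'pos (R b))
  linarith

end ResolventPair

theorem schur_forms_comparison_general
    {H : Type*} [NormedAddCommGroup H] [InnerProductSpace ℂ H]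
    (A : H →ₗ.[ℂ] H)
    (P : H →L[ℂ] H)
    (E E' : ℝ) (hEE' : E ≤ E')
    (RE RE' : H →L[ℂ] H)
    (hREsa : ∀ u v : H, ⟪RE u, v⟫ = ⟪u, RE v⟫)
    (hREpos : ∀ u : H, 0 ≤ (⟪u, RE u⟫).re)
    (hRE'pos : ∀ u : H, 0 ≤ (⟪u, RE' u⟫).re)
    (hcomm : ∀ u : H, RE (RE' u) = RE' (RE u))
    (hres : ∀ u : H, RE u - RE' u = ((E' - E : ℝ) : ℂ) • RE (RE' u)) :
    ∀ x : A.domain, P (x : H) = (x : H) →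
      ((⟪(x : H), A x⟫).re - E' * ‖(x : H)‖ ^ 2 +
          (⟪A x - P (A x), RE' (A x - P (A x))⟫).re) +
        (E' - E) * (‖(x : H)‖ ^ 2 + ‖RE' (A x - P (A x))‖ ^ 2) ≤
      (⟪(x : H), A x⟫).re - E * ‖(x : H)‖ ^ 2 +
          (⟪A x - P (A x), RE (A x - P (A x))⟫).re ∧
      (⟪(x : H), A x⟫).re - E * ‖(x : H)‖ ^ 2 +
          (⟪A x - P (A x), RE (A x - P (A x))⟫).re ≤
      ((⟪(x : H), A x⟫).re - E' * ‖(x : H)‖ ^ 2 +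
          (⟪A x - P (A x), RE' (A x - P (A x))⟫).re) +
        (E' - E) * (‖(x : H)‖ ^ 2 + ‖RE (A x - P (A x))‖ ^ 2) := by
  intro x _
  set b := A x - P (A x)
  have hc : 0 ≤ E' - E := sub_nonneg.mpr hEE'
  have hdiff := re_inner_apply_sub_re_inner_apply (R := (RE : H →ₗ[ℂ] H)) (c := E' - E)
    hREsa hres b
  have hlow := mul_le_mul_of_nonneg_left
    (norm_sq_apply_right_le_re_inner (R := (RE : H →ₗ[ℂ] H)) hc hREpos hres b) hc
  have hhigh := mul_le_mul_of_nonneg_left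
    (re_inner_le_norm_sq_apply_left (R := (RE : H →ₗ[ℂ] H)) hc hRE'pos hcomm hres b) hc
  simp only [RCLike.re_to_complex, ContinuousLinearMap.coe_coe] at hdiff hlow hhigh
  constructor
  · linear_combination hlow - hdiff
  · linear_combination hhigh + hdiff

/-- For `λ₀ < E ≤ E′` and every `x ∈ F₊`, the Schur complement forms
`q_E(x) = ⟨x,Ax⟩ − E‖x‖² + ⟨Λ₋(Ax), R_E(Λ₋(Ax))⟩` satisfy the two-sided comparison
`q_{E′}(x) + (E′−E)·‖x‖_{E′}² ≤ q_E(x) ≤ q_{E′}(x) + (E′−E)·‖x‖_E²`, where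
`‖x‖_E² = ‖x‖² + ‖R_E(Λ₋(Ax))‖²` and the operators `R_E, R_{E′}` are bounded self-adjoint
positive commuting operators satisfying the resolvent identity and the norm bounds
`‖R_E‖ ≤ 1/(E−λ₀)`, `‖R_{E′}‖ ≤ 1/(E′−λ₀)`. -/
theorem schur_forms_comparison
    {H : Type*} [NormedAddCommGroup H] [InnerProductSpace ℂ H] [CompleteSpace H]
    (A : H →ₗ.[ℂ] H)
    (hdense : Dense (A.domain : Set H))
    (hsymm : ∀ x y : A.domain, ⟪A x, (y : H)⟫ = ⟪(x : H), A y⟫)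
    (P : H →L[ℂ] H)
    (hPsa : ∀ u v : H, ⟪P u, v⟫ = ⟪u, P v⟫)
    (hPidem : ∀ u : H, P (P u) = P u)
    (hPinv : ∀ x ∈ A.domain, P x ∈ A.domain)
    (lam0 E E' : ℝ) (hE : lam0 < E) (hEE' : E ≤ E')
    (RE RE' : H →L[ℂ] H)
    (hREsa : ∀ u v : H, ⟪RE u, v⟫ = ⟪u, RE v⟫)
    (hRE'sa : ∀ u v : H, ⟪RE' u, v⟫ = ⟪u, RE' v⟫)
    (hREpos : ∀ u : H, 0 ≤ (⟪u, RE u⟫).re)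
    (hRE'pos : ∀ u : H, 0 ≤ (⟪u, RE' u⟫).re)
    (hcomm : ∀ u : H, RE (RE' u) = RE' (RE u))
    (hres : ∀ u : H, RE u - RE' u = ((E' - E : ℝ) : ℂ) • RE (RE' u))
    (hREnorm : ‖RE‖ ≤ 1 / (E - lam0))
    (hRE'norm : ‖RE'‖ ≤ 1 / (E' - lam0)) :
    ∀ x : A.domain, P (x : H) = (x : H) →
      ((⟪(x : H), A x⟫).re - E' * ‖(x : H)‖ ^ 2 +
          (⟪A x - P (A x), RE' (A x - P (A x))⟫).re) +
        (E' - E) * (‖(x : H)‖ ^ 2 + ‖RE' (A x - P (A x))‖ ^ 2) ≤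
      (⟪(x : H), A x⟫).re - E * ‖(x : H)‖ ^ 2 +
          (⟪A x - P (A x), RE (A x - P (A x))⟫).re ∧
      (⟪(x : H), A x⟫).re - E * ‖(x : H)‖ ^ 2 +
          (⟪A x - P (A x), RE (A x - P (A x))⟫).re ≤
      ((⟪(x : H), A x⟫).re - E' * ‖(x : H)‖ ^ 2 +
          (⟪A x - P (A x), RE' (A x - P (A x))⟫).re) +
        (E' - E) * (‖(x : H)‖ ^ 2 + ‖RE (A x - P (A x))‖ ^ 2) :=
  schur_forms_comparison_general A P E E' hEE' RE RE' hREsa hREpos hRE'pos hcomm hres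
end

section
/- For fixed x ∈ F₊ \ {0}, the function E ↦ Q(E,x) is real-valued, strictly decreasing and continuous on the interval (λ₀, ∞), and Q(E,x) → −∞ as E → ∞. -/
open Filter Set

local notation "⟪" x ", " y "⟫" => @inner ℂ _ _ x y

/-! For `x ∈ F₊` and `y ∈ F₋` the vectors are orthogonal, so `Q(E, x) = sup_y (c_y - E m_y)` is
a supremum of affine functions of `E` whose slopes satisfy `m_y = ‖x + y‖² ≥ ‖x‖² > 0`. Expanding
the form and using `⟨y, Ay⟩ ≤ λ₀‖y‖²` gives `c_y - E m_y ≤ ⟨x, Ax⟩ - E‖x‖² + ‖Ax‖² / (E - λ₀)`,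
so the supremum is finite on `(λ₀, ∞)`. A finite supremum of affine functions is convex, hence
continuous on the open interval, and the uniform lower bound on the slopes gives
`Q(E₂, x) ≤ Q(E₁, x) - (E₂ - E₁)‖x‖²`, which yields both strict decrease and the limit `-∞`. -/

theorem convexOn_ciSup {ι E : Type*} [Nonempty ι] [AddCommMonoid E] [Module ℝ E] {s : Set E}
    {f : ι → E → ℝ} (hf : ∀ i, ConvexOn ℝ s (f i))
    (hbdd : ∀ x ∈ s, BddAbove (range fun i => f i x)) :
    ConvexOn ℝ s fun x => ⨆ i, f i x := by
  refine ⟨(hf (Classical.arbitrary ι)).1, fun x hx y hy a b ha hb hab => ciSup_le fun i => ?_⟩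
  calc f i (a • x + b • y) ≤ a * f i x + b * f i y := (hf i).2 hx hy ha hb hab
    _ ≤ a * (⨆ i, f i x) + b * (⨆ i, f i y) := by
      gcongr
      exacts [le_ciSup (hbdd x hx) i, le_ciSup (hbdd y hy) i]

theorem convexOn_const_sub_mul (c m : ℝ) : ConvexOn ℝ univ fun E : ℝ => c - E * m :=
  ⟨convex_univ, fun x _ y _ a b _ _ hab => le_of_eq <| by
    simp only [smul_eq_mul]; linear_combination (-c) * hab⟩

section AffineSupremum

variable {ι : Type*} [Nonempty ι] (c m : ι → ℝ)

theorem ciSup_sub_mul_le_sub {n E₁ E₂ : ℝ} (hm : ∀ i, n ≤ m i)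
    (hbdd : BddAbove (range fun i => c i - E₁ * m i)) (h : E₁ ≤ E₂) :
    ⨆ i, c i - E₂ * m i ≤ (⨆ i, c i - E₁ * m i) - (E₂ - E₁) * n :=
  ciSup_le fun i => calc
    c i - E₂ * m i = (c i - E₁ * m i) - (E₂ - E₁) * m i := by ring
    _ ≤ (⨆ i, c i - E₁ * m i) - (E₂ - E₁) * n :=
      sub_le_sub (le_ciSup hbdd i) (mul_le_mul_of_nonneg_left (hm i) (sub_nonneg.2 h))

theorem strictAntiOn_ciSup_sub_mul {s : Set ℝ} {n : ℝ} (hn : 0 < n) (hm : ∀ i, n ≤ m i)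
    (hbdd : ∀ E ∈ s, BddAbove (range fun i => c i - E * m i)) :
    StrictAntiOn (fun E => ⨆ i, c i - E * m i) s := fun E₁ h₁ _ _ h₁₂ =>
  (ciSup_sub_mul_le_sub c m hm (hbdd E₁ h₁) h₁₂.le).trans_lt
    (sub_lt_self _ (mul_pos (sub_pos.2 h₁₂) hn))

theorem continuousOn_ciSup_sub_mul {s : Set ℝ} (hs : Convex ℝ s) (hs' : IsOpen s)
    (hbdd : ∀ E ∈ s, BddAbove (range fun i => c i - E * m i)) :
    ContinuousOn (fun E => ⨆ i, c i - E * m i) s :=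
  (convexOn_ciSup (fun i => (convexOn_const_sub_mul (c i) (m i)).subset (subset_univ s) hs)
    hbdd).continuousOn hs'

theorem tendsto_ciSup_sub_mul_atBot {n E₀ : ℝ} (hn : 0 < n) (hm : ∀ i, n ≤ m i)
    (hbdd : BddAbove (range fun i => c i - E₀ * m i)) :
    Tendsto (fun E => ⨆ i, c i - E * m i) atTop atBot := by
  refine tendsto_atBot_mono' atTop
    ((eventually_ge_atTop E₀).mono fun E hE => ciSup_sub_mul_le_sub c m hm hbdd hE) ?_
  simpa only [sub_eq_add_neg, Function.comp_def, id] using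
    tendsto_atBot_add_const_left _ (⨆ i, c i - E₀ * m i)
    (tendsto_neg_atTop_atBot.comp
      ((tendsto_atTop_add_const_right _ (-E₀) tendsto_id).atTop_mul_const hn))

end AffineSupremum

theorem two_mul_mul_sub_mul_sq_le {t a d : ℝ} (hd : 0 < d) : 2 * t * a - d * t ^ 2 ≤ a ^ 2 / d := by
  rw [le_div_iff₀ hd]
  nlinarith [sq_nonneg (d * t - a)]

section QuadraticForm

variable {H : Type*} [NormedAddCommGroup H] [InnerProductSpace ℂ H]

theorem inner_eq_zero_of_map_eq_self_of_map_eq_zero {P : H →L[ℂ] H}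
    (hP : ∀ u v : H, ⟪P u, v⟫ = ⟪u, P v⟫) {x y : H} (hx : P x = x) (hy : P y = 0) :
    ⟪x, y⟫ = 0 := by
  rw [← hx, hP, hy, inner_zero_right]

theorem norm_add_sq_eq_of_inner_eq_zero {x y : H} (h : ⟪x, y⟫ = 0) :
    ‖x + y‖ ^ 2 = ‖x‖ ^ 2 + ‖y‖ ^ 2 := by
  simp only [sq, norm_add_sq_eq_norm_sq_add_norm_sq_of_inner_eq_zero x y h]

variable {A : H →ₗ.[ℂ] H} (hA : ∀ x y : A.domain, ⟪A x, (y : H)⟫ = ⟪(x : H), A y⟫)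
include hA

theorem re_inner_map_add_add (x y : A.domain) :
    (⟪(x : H) + y, A (x + y)⟫).re =
      (⟪(x : H), A x⟫).re + 2 * (⟪(y : H), A x⟫).re + (⟪(y : H), A y⟫).re := by
  have hxy : (⟪(x : H), A y⟫).re = (⟪(y : H), A x⟫).re := by
    rw [← hA, ← inner_conj_symm, Complex.conj_re]
  rw [A.map_add, inner_add_left, inner_add_right, inner_add_right]
  simp only [Complex.add_re, hxy]
  ring

/-- Completing the square in `‖y‖` bounds `φ_{E,x}(y)` uniformly in `y ∈ F₋`. -/
theorem re_inner_map_add_sub_le {x y : A.domain} (horth : ⟪(x : H), y⟫ = 0) {lam0 E : ℝ}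
    (hy : (⟪(y : H), A y⟫).re ≤ lam0 * ‖(y : H)‖ ^ 2) (hE : lam0 < E) :
    (⟪(x : H) + y, A (x + y)⟫).re - E * ‖(x : H) + y‖ ^ 2 ≤
      (⟪(x : H), A x⟫).re - E * ‖(x : H)‖ ^ 2 + ‖A x‖ ^ 2 / (E - lam0) := by
  have hcross : (⟪(y : H), A x⟫).re ≤ ‖(y : H)‖ * ‖A x‖ :=
    (Complex.re_le_norm _).trans (norm_inner_le_norm _ _)
  have hsq := two_mul_mul_sub_mul_sq_le (t := ‖(y : H)‖) (a := ‖A x‖) (sub_pos.2 hE)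
  rw [re_inner_map_add_add hA, norm_add_sq_eq_of_inner_eq_zero horth]
  nlinarith

end QuadraticForm

theorem schur_complement_strict_anti_continuous_general
    {H : Type*} [NormedAddCommGroup H] [InnerProductSpace ℂ H]
    (A : H →ₗ.[ℂ] H)
    (hsymm : ∀ x y : A.domain, ⟪A x, (y : H)⟫ = ⟪(x : H), A y⟫)
    (P : H →L[ℂ] H)
    (hPsa : ∀ u v : H, ⟪P u, v⟫ = ⟪u, P v⟫)
    (lam0 : ℝ)
    (hlam0 : ∀ y : A.domain, P (y : H) = 0 →
      (⟪(y : H), A y⟫).re ≤ lam0 * ‖(y : H)‖ ^ 2)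
    (SQ : ℝ → A.domain → Set ℝ)
    (hSQ : ∀ (E : ℝ) (x : A.domain), SQ E x =
      {r : ℝ | ∃ y : A.domain, P (y : H) = 0 ∧
        r = (⟪(x : H) + (y : H), A (x + y)⟫).re - E * ‖(x : H) + (y : H)‖ ^ 2})
    (Q : ℝ → A.domain → ℝ)
    (hQ : ∀ (E : ℝ) (x : A.domain), Q E x = sSup (SQ E x)) :
    ∀ x : A.domain, P (x : H) = (x : H) → (x : H) ≠ 0 →
      (∀ E : ℝ, lam0 < E → BddAbove (SQ E x)) ∧
      StrictAntiOn (fun E => Q E x) (Set.Ioi lam0) ∧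
      ContinuousOn (fun E => Q E x) (Set.Ioi lam0) ∧
      Tendsto (fun E => Q E x) atTop atBot := by
  intro x hPx hx0
  let FMinus := {y : A.domain // P (y : H) = 0}
  have : Nonempty FMinus := ⟨⟨0, by simp⟩⟩
  let c : FMinus → ℝ := fun y => (⟪(x : H) + y.1, A (x + y.1)⟫).re
  let m : FMinus → ℝ := fun y => ‖(x : H) + y.1‖ ^ 2
  have horth (y : FMinus) : ⟪(x : H), y.1⟫ = 0 :=
    inner_eq_zero_of_map_eq_self_of_map_eq_zero hPsa hPx y.2
  have hSQ_eq (E : ℝ) : SQ E x = range fun y => c y - E * m y := by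
    ext r
    simp [hSQ, c, m, FMinus, eq_comm]
  have hQ_eq : (fun E => Q E x) = fun E => ⨆ y, c y - E * m y := by
    ext E
    rw [hQ, hSQ_eq]
    rfl
  have hm (y : FMinus) : ‖(x : H)‖ ^ 2 ≤ m y := by
    simp only [m, norm_add_sq_eq_of_inner_eq_zero (horth y)]
    exact le_add_of_nonneg_right (sq_nonneg _)
  have hbdd (E : ℝ) (hE : lam0 < E) : BddAbove (SQ E x) := by
    rw [hSQ_eq]
    exact ⟨_, forall_mem_range.2 fun y => re_inner_map_add_sub_le hsymm (horth y) (hlam0 y y.2) hE⟩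
  have hbdd' : ∀ E ∈ Ioi lam0, BddAbove (range fun y => c y - E * m y) :=
    fun E hE => hSQ_eq E ▸ hbdd E hE
  have hn : 0 < ‖(x : H)‖ ^ 2 := pow_pos (norm_pos_iff.2 hx0) 2
  rw [hQ_eq]
  exact ⟨hbdd, strictAntiOn_ciSup_sub_mul c m hn hm hbdd',
    continuousOn_ciSup_sub_mul c m (convex_Ioi _) isOpen_Ioi hbdd',
    tendsto_ciSup_sub_mul_atBot c m hn hm (hbdd' (lam0 + 1) (mem_Ioi.2 (lt_add_one lam0)))⟩

/-- For fixed `x ∈ F₊ \ {0}`, the function `E ↦ Q(E,x)` (where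
`Q(E,x) = sup_{y∈F₋} (⟨x+y, A(x+y)⟩ − E‖x+y‖²)`) is real-valued (the supremum is finite
for every `E > λ₀`), strictly decreasing and continuous on `(λ₀, ∞)`, and tends to `−∞`
as `E → ∞`. -/
theorem schur_complement_strict_anti_continuous
    {H : Type*} [NormedAddCommGroup H] [InnerProductSpace ℂ H] [CompleteSpace H]
    (A : H →ₗ.[ℂ] H)
    (hdense : Dense (A.domain : Set H))
    (hsymm : ∀ x y : A.domain, ⟪A x, (y : H)⟫ = ⟪(x : H), A y⟫)
    (P : H →L[ℂ] H)
    (hPsa : ∀ u v : H, ⟪P u, v⟫ = ⟪u, P v⟫)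
    (hPidem : ∀ u : H, P (P u) = P u)
    (hPinv : ∀ x ∈ A.domain, P x ∈ A.domain)
    (lam0 : ℝ)
    (hlam0 : ∀ y : A.domain, P (y : H) = 0 →
      (⟪(y : H), A y⟫).re ≤ lam0 * ‖(y : H)‖ ^ 2)
    (SQ : ℝ → A.domain → Set ℝ)
    (hSQ : ∀ (E : ℝ) (x : A.domain), SQ E x =
      {r : ℝ | ∃ y : A.domain, P (y : H) = 0 ∧
        r = (⟪(x : H) + (y : H), A (x + y)⟫).re - E * ‖(x : H) + (y : H)‖ ^ 2})
    (Q : ℝ → A.domain → ℝ)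
    (hQ : ∀ (E : ℝ) (x : A.domain), Q E x = sSup (SQ E x)) :
    ∀ x : A.domain, P (x : H) = (x : H) → (x : H) ≠ 0 →
      (∀ E : ℝ, lam0 < E → BddAbove (SQ E x)) ∧
      StrictAntiOn (fun E => Q E x) (Set.Ioi lam0) ∧
      ContinuousOn (fun E => Q E x) (Set.Ioi lam0) ∧
      Tendsto (fun E => Q E x) atTop atBot :=
  schur_complement_strict_anti_continuous_general A hsymm P hPsa lam0 hlam0 SQ hSQ Q hQ
end

section
/- Assume the Hardy-type inequality of Dolbeault–Esteban–Loss–Vega: for every ψ ∈ C_c^∞(ℝ³; ℂ²), ∫_{ℝ³} |(σ·∇ψ)(x)|²/(1 + 1/|x|) dx + ∫_{ℝ³} (1 − 1/|x|)·|ψ(x)|² dx ≥ 0. Then for every ν ∈ [0,1] and every ψ ∈ C_c^∞(ℝ³; ℂ²): ∫_{ℝ³} |(σ·∇ψ)(x)|²/(1 + ν/|x|) dx + ∫_{ℝ³} (1 − ν/|x|)·|ψ(x)|² dx ≥ 0; that is, the Schur complement form q₀ of the Dirac–Coulomb operator H_ν in the Talman decomposition is nonnegative for all ν ∈ [0,1].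 -/
/-!
Scaling. For `ν > 0` apply the Hardy inequality to `φ y = ψ (ν y)` and substitute `y = x / ν`:
the coupling `1/|y|` becomes `ν/|x|`, `σ·∇φ` picks up a factor `ν` and the volume element a
factor `ν⁻³`. Multiplied by `ν³` the inequality reads `ν² K + P ≥ 0`, where `K ≥ 0` and `P` are
the kinetic and potential terms with coupling `ν`; since `ν² ≤ 1`, also `K + P ≥ 0`.
-/

open MeasureTheory

noncomputable def pauli : Fin 3 → Matrix (Fin 2) (Fin 2) ℂ :=
  ![!![0, 1; 1, 0], !![0, -Complex.I; Complex.I, 0], !![1, 0; 0, -1]]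

/-- `(σ·∇ψ)(x) = Σᵢ σⁱ (∂ᵢψ)(x)` for `ψ : ℝ³ → ℂ²`. -/
noncomputable def sigmaGrad (ψ : EuclideanSpace ℝ (Fin 3) → EuclideanSpace ℂ (Fin 2))
    (x : EuclideanSpace ℝ (Fin 3)) : EuclideanSpace ℂ (Fin 2) :=
  (WithLp.equiv 2 (Fin 2 → ℂ)).symm
    (∑ i : Fin 3, (pauli i).mulVec
      ((WithLp.equiv 2 (Fin 2 → ℂ)) (fderiv ℝ ψ x (EuclideanSpace.single i (1 : ℝ)))))

local notation "ℝ³" => EuclideanSpace ℝ (Fin 3)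

local notation "ℂ²" => EuclideanSpace ℂ (Fin 2)

noncomputable def diracKineticForm (ν : ℝ) (ψ : ℝ³ → ℂ²) : ℝ :=
  ∫ x, ‖sigmaGrad ψ x‖ ^ 2 / (1 + ν / ‖x‖)

noncomputable def coulombPotentialForm (ν : ℝ) (ψ : ℝ³ → ℂ²) : ℝ :=
  ∫ x, (1 - ν / ‖x‖) * ‖ψ x‖ ^ 2

lemma div_norm_eq_mul_div_norm_smul {E : Type*} [NormedAddCommGroup E] [NormedSpace ℝ E]
    {ν : ℝ} (hν : 0 < ν) (c : ℝ) (x : E) : c / ‖x‖ = ν * c / ‖ν • x‖ := by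
  rw [norm_smul, Real.norm_of_nonneg hν.le, mul_div_mul_left _ _ hν.ne']

lemma sigmaGrad_comp_smul (ψ : ℝ³ → ℂ²) (ν : ℝ) (x : ℝ³) :
    sigmaGrad (fun y => ψ (ν • y)) x = ν • sigmaGrad ψ (ν • x) := by
  simp only [sigmaGrad, fderiv_comp_smul, FunLike.coe_smul, Pi.smul_apply, WithLp.equiv_apply,
    WithLp.ofLp_smul, Matrix.mulVec_smul, ← Finset.smul_sum, WithLp.equiv_symm_apply,
    WithLp.toLp_smul]

lemma diracKineticForm_nonneg {ν : ℝ} (hν : 0 ≤ ν) (ψ : ℝ³ → ℂ²) :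
    0 ≤ diracKineticForm ν ψ :=
  integral_nonneg fun _ => by positivity

lemma coulombPotentialForm_nonneg {ν : ℝ} (hν : ν ≤ 0) (ψ : ℝ³ → ℂ²) :
    0 ≤ coulombPotentialForm ν ψ :=
  integral_nonneg fun x =>
    mul_nonneg (sub_nonneg.2 ((div_nonpos_of_nonpos_of_nonneg hν (norm_nonneg x)).trans
      zero_le_one)) (sq_nonneg _)

lemma diracKineticForm_comp_smul (ψ : ℝ³ → ℂ²) {ν : ℝ} (hν : 0 < ν) (c : ℝ) :
    diracKineticForm c (fun y => ψ (ν • y)) = ν⁻¹ * diracKineticForm (ν * c) ψ := by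
  have hpoint : ∀ x : ℝ³, ‖sigmaGrad (fun y => ψ (ν • y)) x‖ ^ 2 / (1 + c / ‖x‖) =
      ν ^ 2 * (‖sigmaGrad ψ (ν • x)‖ ^ 2 / (1 + ν * c / ‖ν • x‖)) := fun x => by
    rw [sigmaGrad_comp_smul, norm_smul, Real.norm_of_nonneg hν.le, mul_pow, mul_div_assoc,
      div_norm_eq_mul_div_norm_smul hν c x]
  simp only [diracKineticForm, hpoint]
  rw [Measure.integral_comp_smul_of_nonneg (hR := hν.le) volume
    (fun y => ν ^ 2 * (‖sigmaGrad ψ y‖ ^ 2 / (1 + ν * c / ‖y‖))), finrank_euclideanSpace_fin,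
    integral_const_mul, smul_eq_mul]
  field_simp

lemma coulombPotentialForm_comp_smul (ψ : ℝ³ → ℂ²) {ν : ℝ} (hν : 0 < ν) (c : ℝ) :
    coulombPotentialForm c (fun y => ψ (ν • y)) = (ν ^ 3)⁻¹ * coulombPotentialForm (ν * c) ψ := by
  simp only [coulombPotentialForm, div_norm_eq_mul_div_norm_smul hν c]
  rw [Measure.integral_comp_smul_of_nonneg (hR := hν.le) volume
    (fun y => (1 - ν * c / ‖y‖) * ‖ψ y‖ ^ 2), finrank_euclideanSpace_fin, smul_eq_mul]

/-- Assuming the Hardy-type inequality of Dolbeault–Esteban–Loss–Vega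
(`∫ |σ·∇ψ|²/(1 + 1/|x|) + ∫ (1 − 1/|x|)|ψ|² ≥ 0` for all `ψ ∈ C_c^∞(ℝ³;ℂ²)`), the Schur
complement form `q₀` of the Dirac–Coulomb operator `H_ν` in the Talman decomposition is
nonnegative for every `ν ∈ [0,1]`:
`∫ |σ·∇ψ|²/(1 + ν/|x|) + ∫ (1 − ν/|x|)|ψ|² ≥ 0` for all `ψ ∈ C_c^∞(ℝ³;ℂ²)`. -/
theorem hardy_dirac_coulomb_all_nu
    (hHardy : ∀ ψ : EuclideanSpace ℝ (Fin 3) → EuclideanSpace ℂ (Fin 2),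
      ContDiff ℝ (⊤ : ℕ∞) ψ → HasCompactSupport ψ →
      0 ≤ (∫ x : EuclideanSpace ℝ (Fin 3), ‖sigmaGrad ψ x‖ ^ 2 / (1 + 1 / ‖x‖)) +
          ∫ x : EuclideanSpace ℝ (Fin 3), (1 - 1 / ‖x‖) * ‖ψ x‖ ^ 2)
    (ν : ℝ) (hν0 : 0 ≤ ν) (hν1 : ν ≤ 1)
    (ψ : EuclideanSpace ℝ (Fin 3) → EuclideanSpace ℂ (Fin 2))
    (hψ : ContDiff ℝ (⊤ : ℕ∞) ψ) (hsupp : HasCompactSupport ψ) :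
    0 ≤ (∫ x : EuclideanSpace ℝ (Fin 3), ‖sigmaGrad ψ x‖ ^ 2 / (1 + ν / ‖x‖)) +
        ∫ x : EuclideanSpace ℝ (Fin 3), (1 - ν / ‖x‖) * ‖ψ x‖ ^ 2 := by
  change 0 ≤ diracKineticForm ν ψ + coulombPotentialForm ν ψ
  have hK := diracKineticForm_nonneg hν0 ψ
  rcases hν0.eq_or_lt with rfl | hν
  · exact add_nonneg hK (coulombPotentialForm_nonneg le_rfl ψ)
  have hscaled : 0 ≤ ν⁻¹ * diracKineticForm ν ψ + (ν ^ 3)⁻¹ * coulombPotentialForm ν ψ := by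
    have := hHardy (fun y => ψ (ν • y)) (hψ.comp (contDiff_const_smul ν))
      (hsupp.comp_smul hν.ne')
    rwa [← diracKineticForm, ← coulombPotentialForm, diracKineticForm_comp_smul ψ hν,
      coulombPotentialForm_comp_smul ψ hν, mul_one] at this
  have hweighted : 0 ≤ ν ^ 2 * diracKineticForm ν ψ + coulombPotentialForm ν ψ := by
    have := mul_nonneg (pow_pos hν 3).le hscaled
    field_simp at this
    linarith
  linarith [mul_nonneg (sub_nonneg.2 (pow_le_one₀ hν0 hν1 : ν ^ 2 ≤ 1)) hK]
end
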